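/- Let A be an n×n Hermitian matrix with spectral decomposition A = U diag(y_1,...,y_n) U^H. The Hermitian positive semidefinite matrix V minimizing ‖V − A‖_F^2 subject to Tr(V) ≤ P (with P > 0) is V* = U diag(x_1,...,x_n) U^H, where x_i = max{y_i, 0} if Σ_i max{y_i,0} ≤ P, and otherwise x_i = max{y_i − τ, 0} with τ > 0 chosen so that Σ_i x_i = P. -/

import Mathlib

open Matrix ComplexOrder

noncomputable def frobSq {n m : ℕ} (M : Matrix (Fin n) (Fin m) ℂ) : ℝ :=
  ∑ i, ∑ j, ‖M i j‖ ^ 2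

/-- Auxiliary vector optimization: `x` minimizes `∑ (x i - y i)²` over
nonnegative vectors with sum at most `P`. -/
lemma vec_opt_aux (n : ℕ) (y x d : Fin n → ℝ) (P : ℝ)
    (hx : ((∑ i, max (y i) 0) ≤ P ∧ ∀ i, x i = max (y i) 0) ∨
          (P < (∑ i, max (y i) 0) ∧ ∃ τ : ℝ, 0 < τ ∧
            (∀ i, x i = max (y i - τ) 0) ∧ (∑ i, x i) = P))
    (hd0 : ∀ i, 0 ≤ d i) (hdP : (∑ i, d i) ≤ P) :
    ∑ i, (x i - y i) ^ 2 ≤ ∑ i, (d i - y i) ^ 2 := by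
  have key : 0 ≤ ∑ i, (d i - x i) * (x i - y i) := by
    rcases hx with ⟨_, hx⟩ | ⟨_, τ, hτ, hx, hsum⟩
    · apply Finset.sum_nonneg
      intro i _
      rcases le_or_gt 0 (y i) with h | h
      · rw [hx i, max_eq_left h]; simp
      · rw [hx i, max_eq_right h.le]
        nlinarith [hd0 i]
    · have hsplit : ∑ i, (d i - x i) * (x i - y i)
        = (-τ) * ((∑ i, d i) - (∑ i, x i)) + ∑ i, (d i - x i) * (x i - y i + τ) := by
        rw [mul_sub, Finset.mul_sum, Finset.mul_sum, ← Finset.sum_sub_distrib,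
          ← Finset.sum_add_distrib]
        apply Finset.sum_congr rfl; intro i _; ring
      rw [hsplit]
      have h1 : 0 ≤ (-τ) * ((∑ i, d i) - (∑ i, x i)) := by
        rw [hsum]; nlinarith
      have h2 : 0 ≤ ∑ i, (d i - x i) * (x i - y i + τ) := by
        apply Finset.sum_nonneg
        intro i _
        rcases le_or_gt 0 (y i - τ) with h | h
        · rw [hx i, max_eq_left h]; ring_nf; simp
        · rw [hx i, max_eq_right h.le]
          have := hd0 i; nlinarith
      linarith
  have expand : ∀ i, (d i - y i) ^ 2 - (x i - y i) ^ 2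
      = (d i - x i) ^ 2 + 2 * ((d i - x i) * (x i - y i)) := by intro i; ring
  have : ∑ i, (d i - y i) ^ 2 - ∑ i, (x i - y i) ^ 2
      = ∑ i, (d i - x i) ^ 2 + 2 * ∑ i, (d i - x i) * (x i - y i) := by
    rw [← Finset.sum_sub_distrib, Finset.mul_sum, ← Finset.sum_add_distrib]
    exact Finset.sum_congr rfl fun i _ => expand i
  nlinarith [Finset.sum_nonneg (fun i (_ : i ∈ Finset.univ) => sq_nonneg (d i - x i))]

lemma frobSq_eq_trace {n : ℕ} (M : Matrix (Fin n) (Fin n) ℂ) :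
    frobSq M = (Matrix.trace (Mᴴ * M)).re := by
  unfold frobSq
  rw [Matrix.trace]
  simp only [Matrix.diag_apply, Matrix.mul_apply, Matrix.conjTranspose_apply]
  rw [Complex.re_sum]
  rw [Finset.sum_comm]
  congr 1; ext i
  rw [Complex.re_sum]
  congr 1; ext j
  simp [Complex.star_def, ← Complex.normSq_eq_conj_mul_self, Complex.normSq_eq_norm_sq,
    ← Complex.ofReal_pow]

lemma frobSq_conj {n : ℕ} (U N : Matrix (Fin n) (Fin n) ℂ)
    (hU : U ∈ Matrix.unitaryGroup (Fin n) ℂ) :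
    frobSq (U * N * Uᴴ) = frobSq N := by
  have h1 : Uᴴ * U = 1 := by
    simpa [Matrix.star_eq_conjTranspose] using hU.1
  rw [frobSq_eq_trace, frobSq_eq_trace]
  have : (U * N * Uᴴ)ᴴ * (U * N * Uᴴ) = U * (Nᴴ * N) * Uᴴ := by
    simp only [Matrix.conjTranspose_mul, Matrix.conjTranspose_conjTranspose,
      Matrix.mul_assoc]
    rw [← Matrix.mul_assoc Uᴴ U, h1, Matrix.one_mul]
  rw [this, Matrix.trace_mul_cycle, ← Matrix.mul_assoc, h1, Matrix.one_mul]

lemma frobSq_diagonal {n : ℕ} (c : Fin n → ℂ) :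
    frobSq (Matrix.diagonal c) = ∑ i, ‖c i‖ ^ 2 := by
  unfold frobSq
  congr 1; ext i
  rw [Finset.sum_eq_single i]
  · simp
  · intro j _ hj; simp [Matrix.diagonal_apply_ne' _ hj]
  · simp

lemma psd_diag_re_nonneg {n : ℕ} {M : Matrix (Fin n) (Fin n) ℂ} (hM : M.PosSemidef)
    (i : Fin n) : 0 ≤ (M i i).re := by
  have h := hM.dotProduct_mulVec_nonneg (Pi.single i 1)
  simp [dotProduct, Matrix.mulVec, Pi.single_apply] at h
  exact (Complex.le_def.mp h).1

/-- Proposition 2: projection of a Hermitian matrix `A = U diag(y) Uᴴ` onto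
the set `{V ⪰ 0 : Tr V ≤ P}`.  The minimizer of `‖V − A‖_F²` is
`V* = U diag(x) Uᴴ` where `x_i = max{y_i,0}` if `∑ max{y_i,0} ≤ P`, and
otherwise `x_i = max{y_i − τ, 0}` with `τ > 0` such that `∑ x_i = P`. -/
theorem stmt4 (n : ℕ) (A U : Matrix (Fin n) (Fin n) ℂ)
    (hU : U ∈ Matrix.unitaryGroup (Fin n) ℂ) (y : Fin n → ℝ) (P : ℝ) (hP : 0 < P)
    (hA : A = U * Matrix.diagonal (fun i => (y i : ℂ)) * Uᴴ)
    (x : Fin n → ℝ)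
    (hx : ((∑ i, max (y i) 0) ≤ P ∧ ∀ i, x i = max (y i) 0) ∨
          (P < (∑ i, max (y i) 0) ∧ ∃ τ : ℝ, 0 < τ ∧
            (∀ i, x i = max (y i - τ) 0) ∧ (∑ i, x i) = P)) :
    let V : Matrix (Fin n) (Fin n) ℂ :=
      U * Matrix.diagonal (fun i => (x i : ℂ)) * Uᴴ
    V.PosSemidef ∧ (V.trace).re ≤ P ∧
    ∀ W : Matrix (Fin n) (Fin n) ℂ, W.PosSemidef → (W.trace).re ≤ P →
      frobSq (V - A) ≤ frobSq (W - A) := by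
  intro V
  have h1 : Uᴴ * U = 1 := by simpa [Matrix.star_eq_conjTranspose] using hU.1
  have h2 : U * Uᴴ = 1 := by simpa [Matrix.star_eq_conjTranspose] using hU.2
  have hx0 : ∀ i, 0 ≤ x i := by
    intro i
    rcases hx with ⟨_, hx⟩ | ⟨_, τ, _, hx, _⟩
    · rw [hx i]; exact le_max_right _ _
    · rw [hx i]; exact le_max_right _ _
  have hxP : (∑ i, x i) ≤ P := by
    rcases hx with ⟨h, hx⟩ | ⟨_, τ, _, _, hsum⟩
    · calc (∑ i, x i) = ∑ i, max (y i) 0 := Finset.sum_congr rfl fun i _ => hx i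
        _ ≤ P := h
    · exact hsum.le
  refine ⟨?_, ?_, ?_⟩
  · -- positive semidefiniteness
    have hD : (Matrix.diagonal (fun i => (x i : ℂ))).PosSemidef := by
      refine Matrix.PosSemidef.diagonal fun i => ?_
      simp only [Pi.zero_apply]
      exact_mod_cast Complex.zero_le_real.mpr (hx0 i)
    exact hD.mul_mul_conjTranspose_same U
  · -- trace bound
    have : V.trace = Matrix.trace (Matrix.diagonal fun i => (x i : ℂ)) := by
      show Matrix.trace (U * _ * Uᴴ) = _
      rw [Matrix.trace_mul_cycle, h1, Matrix.one_mul]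
    rw [this, Matrix.trace_diagonal]
    simpa [Complex.re_sum] using hxP
  · -- optimality
    intro W hW hWt
    -- value at V
    have hVA : V - A = U * Matrix.diagonal (fun i => ((x i - y i : ℝ) : ℂ)) * Uᴴ := by
      rw [hA]
      show U * _ * Uᴴ - _ = _
      rw [← Matrix.sub_mul, ← Matrix.mul_sub, Matrix.diagonal_sub]
      congr 2
      ext i
      push_cast
      ring
    have hVval : frobSq (V - A) = ∑ i, (x i - y i) ^ 2 := by
      rw [hVA, frobSq_conj _ _ hU, frobSq_diagonal]
      apply Finset.sum_congr rfl
      intro i _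
      rw [Complex.norm_real, Real.norm_eq_abs, sq_abs]
    -- value at W
    set M := Uᴴ * W * U with hM
    have hMpsd : M.PosSemidef := hW.conjTranspose_mul_mul_same U
    have hWU : U * M * Uᴴ = W := by
      rw [hM]
      calc U * (Uᴴ * W * U) * Uᴴ = (U * Uᴴ) * W * (U * Uᴴ) := by
            simp only [Matrix.mul_assoc]
        _ = W := by rw [h2, Matrix.one_mul, Matrix.mul_one]
    have hWA : W - A = U * (M - Matrix.diagonal fun i => (y i : ℂ)) * Uᴴ := by
      rw [hA, Matrix.mul_sub, Matrix.sub_mul, hWU]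
    have hMtr : (∑ i, (M i i).re) ≤ P := by
      have : M.trace = W.trace := by
        rw [hM, Matrix.trace_mul_cycle, h2, Matrix.one_mul]
      have htr : (M.trace).re ≤ P := by rw [this]; exact hWt
      rwa [Matrix.trace, Complex.re_sum] at htr
    have hd0 : ∀ i, 0 ≤ (M i i).re := psd_diag_re_nonneg hMpsd
    have hWval : (∑ i, ((M i i).re - y i) ^ 2) ≤ frobSq (W - A) := by
      rw [hWA, frobSq_conj _ _ hU]
      unfold frobSq
      apply Finset.sum_le_sum
      intro i _
      calc ((M i i).re - y i) ^ 2
          = ((M - Matrix.diagonal fun j => (y j : ℂ)) i i).re ^ 2 := by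
            simp [Matrix.sub_apply, Matrix.diagonal_apply_eq]
        _ ≤ ‖(M - Matrix.diagonal fun j => (y j : ℂ)) i i‖ ^ 2 := by
            set z := (M - Matrix.diagonal fun j => (y j : ℂ)) i i
            rw [Complex.sq_norm, Complex.normSq_apply]
            nlinarith [sq_nonneg z.im]
        _ ≤ ∑ j, ‖(M - Matrix.diagonal fun j => (y j : ℂ)) i j‖ ^ 2 := by
            exact Finset.single_le_sum
              (f := fun j => ‖(M - Matrix.diagonal fun k => (y k : ℂ)) i j‖ ^ 2)
              (fun j _ => sq_nonneg _) (Finset.mem_univ i)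
    calc frobSq (V - A) = ∑ i, (x i - y i) ^ 2 := hVval
      _ ≤ ∑ i, ((M i i).re - y i) ^ 2 :=
          vec_opt_aux n y x (fun i => (M i i).re) P hx hd0 hMtr
      _ ≤ frobSq (W - A) := hWval
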